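/- arXiv:1010.4472 — 2 statements merged into one kernel-verified Lean document; each statement's English description precedes it below -/
import Mathlib

section
/- Let S_{n,p}(x) be the quartic n²(n+1)(3n+4)(2n-p+1)x⁴ + 4n(n+1)(2n-p+1)(n²-4np-2p²-8p-2)x³ + 2(n⁵-19n⁴p-11n⁴+36n³p²-18n³p-30n³+22n²p³+130n²p²+54n²p-22n²-16np⁴+4np³+108np²+68np-4n-16p⁴-16p³+16p²+16p)x² - 8(p+1)(n-2p)(n+p+1)(n²-6np-2n+2p²-4p-2)x + 8(p+1)²(n-2p)²(n+p+1). For integers n ≥ 3 and 1 ≤ p < n/2, the equation S_{n,p}(x) = 0 has exactly two distinct positive real roots and two distinct negative real roots. -/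
/-!
Writing `n = 2r + q + 3` and `p = r + 1` with `q, r ≥ 0`, the values of `S_{n,p}` at
`2(2p-n)/n < (2p-n)/n < 0 < 2(p+1)/n < 2` become rational functions of `q, r` whose numerators
and denominators have only nonnegative coefficients, up to an overall sign. They alternate in sign
`+, -, +, -, +`, so the intermediate value theorem gives two negative and two positive roots, and a
nonzero quartic has no others.
-/

open Polynomial NNReal

theorem Polynomial.mem_of_isRoot_of_natDegree_le_card {R : Type*} [CommRing R] [IsDomain R]
    {P : R[X]} (hP : P ≠ 0) {s : Finset R} (hs : ∀ y ∈ s, P.IsRoot y)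
    (hdeg : P.natDegree ≤ s.card) {x : R} (hx : P.IsRoot x) : x ∈ s := by
  classical
  by_contra hxs
  refine hP (eq_zero_of_natDegree_lt_card_of_eval_eq_zero' P (insert x s) ?_ ?_)
  · simpa [hx.eq_zero] using hs
  · rw [Finset.card_insert_of_notMem hxs]
    omega

/-- The polynomial `S_{n,p}`, with real parameters. -/
noncomputable def quarticS (n p : ℝ) : ℝ[X] :=
  C (n^2*(n+1)*(3*n+4)*(2*n-p+1)) * X^4
    + C (4*n*(n+1)*(2*n-p+1)*(n^2-4*n*p-2*p^2-8*p-2)) * X^3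
    + C (2*(n^5-19*n^4*p-11*n^4+36*n^3*p^2-18*n^3*p-30*n^3+22*n^2*p^3+130*n^2*p^2
          +54*n^2*p-22*n^2-16*n*p^4+4*n*p^3+108*n*p^2+68*n*p-4*n
          -16*p^4-16*p^3+16*p^2+16*p)) * X^2
    - C (8*(p+1)*(n-2*p)*(n+p+1)*(n^2-6*n*p-2*n+2*p^2-4*p-2)) * X
    + C (8*(p+1)^2*(n-2*p)^2*(n+p+1))

lemma natDegree_quarticS_le (n p : ℝ) : (quarticS n p).natDegree ≤ 4 := by
  unfold quarticS
  compute_degree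

section

variable {n p : ℝ}

lemma exists_nnreal_of_one_le_of_two_mul_add_one_le (hp : 1 ≤ p) (hpn : 2*p + 1 ≤ n) :
    ∃ q r : ℝ≥0, n = 2*r + q + 3 ∧ p = r + 1 := by
  refine ⟨(n - 2*p - 1).toNNReal, (p - 1).toNNReal, ?_, ?_⟩ <;>
    simp only [Real.coe_toNNReal _ (by linarith : (0:ℝ) ≤ n - 2*p - 1),
      Real.coe_toNNReal _ (by linarith : (0:ℝ) ≤ p - 1)] <;> ring

lemma quarticS_eval_two_mul_div_pos (hp : 1 ≤ p) (hpn : 2*p + 1 ≤ n) :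
    0 < (quarticS n p).eval (2*(2*p - n)/n) := by
  obtain ⟨q, r, rfl, rfl⟩ := exists_nnreal_of_one_le_of_two_mul_add_one_le hp hpn
  have hn : (2*r + q + 3 : ℝ) ≠ 0 := by positivity
  have e : (quarticS (2*r + q + 3) (r + 1)).eval (2*(2*(r + 1) - (2*r + q + 3))/(2*r + q + 3) : ℝ)
      = ((q:ℝ)+1)^2 * (40*(q:ℝ)^4 + 168*(q:ℝ)^3*(r:ℝ) + 432*(q:ℝ)^3 + 264*(q:ℝ)^2*(r:ℝ)^2
        + 1352*(q:ℝ)^2*(r:ℝ) + 1728*(q:ℝ)^2 + 184*(q:ℝ)*(r:ℝ)^3 + 1408*(q:ℝ)*(r:ℝ)^2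
        + 3576*(q:ℝ)*(r:ℝ) + 3024*(q:ℝ) + 48*(r:ℝ)^4 + 488*(r:ℝ)^3 + 1848*(r:ℝ)^2
        + 3096*(r:ℝ) + 1944) / (2*r + q + 3) := by
    simp only [quarticS, eval_add, eval_sub, eval_mul, eval_C, eval_pow, eval_X]
    field_simp
    ring
  rw [e]
  positivity

lemma quarticS_eval_div_neg (hp : 1 ≤ p) (hpn : 2*p + 1 ≤ n) :
    (quarticS n p).eval ((2*p - n)/n) < 0 := by
  obtain ⟨q, r, rfl, rfl⟩ := exists_nnreal_of_one_le_of_two_mul_add_one_le hp hpn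
  have hn : (2*r + q + 3 : ℝ) ≠ 0 := by positivity
  have e : (quarticS (2*r + q + 3) (r + 1)).eval ((2*(r + 1) - (2*r + q + 3))/(2*r + q + 3) : ℝ)
      = -(((q:ℝ)+1)^2 * (5*(q:ℝ)^4*(r:ℝ) + 14*(q:ℝ)^4 + 36*(q:ℝ)^3*(r:ℝ)^2
        + 167*(q:ℝ)^3*(r:ℝ) + 200*(q:ℝ)^3 + 96*(q:ℝ)^2*(r:ℝ)^3 + 634*(q:ℝ)^2*(r:ℝ)^2
        + 1413*(q:ℝ)^2*(r:ℝ) + 1068*(q:ℝ)^2 + 112*(q:ℝ)*(r:ℝ)^4 + 960*(q:ℝ)*(r:ℝ)^3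
        + 3112*(q:ℝ)*(r:ℝ)^2 + 4521*(q:ℝ)*(r:ℝ) + 2488*(q:ℝ) + 48*(r:ℝ)^5 + 512*(r:ℝ)^4
        + 2176*(r:ℝ)^3 + 4626*(r:ℝ)^2 + 4934*(r:ℝ) + 2118) / (2*r + q + 3)^2) := by
    simp only [quarticS, eval_add, eval_sub, eval_mul, eval_C, eval_pow, eval_X]
    field_simp
    ring
  rw [e]
  exact neg_neg_of_pos (by positivity)

lemma quarticS_eval_zero_pos (hp : 1 ≤ p) (hpn : 2*p + 1 ≤ n) :
    0 < (quarticS n p).eval 0 := by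
  obtain ⟨q, r, rfl, rfl⟩ := exists_nnreal_of_one_le_of_two_mul_add_one_le hp hpn
  have e : (quarticS (2*r + q + 3) (r + 1)).eval 0
      = 8*((r:ℝ)+2)^2*((q:ℝ)+1)^2*(3*(r:ℝ)+(q:ℝ)+5) := by
    simp only [quarticS, eval_add, eval_sub, eval_mul, eval_C, eval_pow, eval_X]
    ring
  rw [e]
  positivity

lemma quarticS_eval_two_mul_succ_div_neg (hp : 1 ≤ p) (hpn : 2*p + 1 ≤ n) :
    (quarticS n p).eval (2*(p + 1)/n) < 0 := by
  obtain ⟨q, r, rfl, rfl⟩ := exists_nnreal_of_one_le_of_two_mul_add_one_le hp hpn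
  have hn : (2*r + q + 3 : ℝ) ≠ 0 := by positivity
  have e : (quarticS (2*r + q + 3) (r + 1)).eval (2*(r + 1 + 1)/(2*r + q + 3) : ℝ)
      = -(((r:ℝ)+2)^2 * (16*(q:ℝ)^3*(r:ℝ) + 128*(q:ℝ)^2*(r:ℝ)^2 + 336*(q:ℝ)^2*(r:ℝ)
        + 128*(q:ℝ)^2 + 208*(q:ℝ)*(r:ℝ)^3 + 1152*(q:ℝ)*(r:ℝ)^2 + 1840*(q:ℝ)*(r:ℝ)
        + 768*(q:ℝ) + 96*(r:ℝ)^4 + 816*(r:ℝ)^3 + 2432*(r:ℝ)^2 + 2928*(r:ℝ) + 1152)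
        / (2*r + q + 3)^2) := by
    simp only [quarticS, eval_add, eval_sub, eval_mul, eval_C, eval_pow, eval_X]
    field_simp
    ring
  rw [e]
  exact neg_neg_of_pos (by positivity)

lemma quarticS_eval_two_pos (hp : 1 ≤ p) (hpn : 2*p + 1 ≤ n) :
    0 < (quarticS n p).eval 2 := by
  obtain ⟨q, r, rfl, rfl⟩ := exists_nnreal_of_one_le_of_two_mul_add_one_le hp hpn
  have e : (quarticS (2*r + q + 3) (r + 1)).eval 2
      = 168*(q:ℝ)^5 + 1176*(q:ℝ)^4*(r:ℝ) + 2280*(q:ℝ)^4 + 3096*(q:ℝ)^3*(r:ℝ)^2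
        + 11968*(q:ℝ)^3*(r:ℝ) + 11536*(q:ℝ)^3 + 3912*(q:ℝ)^2*(r:ℝ)^3 + 22376*(q:ℝ)^2*(r:ℝ)^2
        + 42608*(q:ℝ)^2*(r:ℝ) + 26960*(q:ℝ)^2 + 2400*(q:ℝ)*(r:ℝ)^4 + 17968*(q:ℝ)*(r:ℝ)^3
        + 50248*(q:ℝ)*(r:ℝ)^2 + 62144*(q:ℝ)*(r:ℝ) + 28616*(q:ℝ) + 576*(r:ℝ)^5
        + 5280*(r:ℝ)^4 + 19176*(r:ℝ)^3 + 34424*(r:ℝ)^2 + 30456*(r:ℝ) + 10568 := by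
    simp only [quarticS, eval_add, eval_sub, eval_mul, eval_C, eval_pow, eval_X]
    ring
  rw [e]
  positivity

lemma exists_four_roots_quarticS (hp : 1 ≤ p) (hpn : 2*p + 1 ≤ n) :
    ∃ a b c d : ℝ, a < b ∧ b < 0 ∧ 0 < c ∧ c < d ∧ (quarticS n p).IsRoot a ∧
      (quarticS n p).IsRoot b ∧ (quarticS n p).IsRoot c ∧ (quarticS n p).IsRoot d := by
  have hn : 0 < n := by linarith
  have ht12 : (2*p - n)/n < 0 := div_neg_of_neg_of_pos (by linarith) hn
  have ht01 : 2*(2*p - n)/n < (2*p - n)/n := by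
    rw [mul_div_assoc]
    linarith
  have ht23 : 0 < 2*(p + 1)/n := div_pos (by linarith) hn
  have ht34 : 2*(p + 1)/n < 2 := by
    rw [div_lt_iff₀ hn]
    linarith
  have hcont : Continuous fun x ↦ (quarticS n p).eval x := (quarticS n p).continuous
  obtain ⟨a, ⟨-, ha⟩, hSa⟩ := intermediate_value_Ioo' ht01.le hcont.continuousOn
    ⟨quarticS_eval_div_neg hp hpn, quarticS_eval_two_mul_div_pos hp hpn⟩
  obtain ⟨b, ⟨hb, hb0⟩, hSb⟩ := intermediate_value_Ioo ht12.le hcont.continuousOn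
    ⟨quarticS_eval_div_neg hp hpn, quarticS_eval_zero_pos hp hpn⟩
  obtain ⟨c, ⟨hc0, hc⟩, hSc⟩ := intermediate_value_Ioo' ht23.le hcont.continuousOn
    ⟨quarticS_eval_two_mul_succ_div_neg hp hpn, quarticS_eval_zero_pos hp hpn⟩
  obtain ⟨d, ⟨hd, -⟩, hSd⟩ := intermediate_value_Ioo ht34.le hcont.continuousOn
    ⟨quarticS_eval_two_mul_succ_div_neg hp hpn, quarticS_eval_two_pos hp hpn⟩
  exact ⟨a, b, c, d, ha.trans hb, hb0, hc0, hc.trans hd, hSa, hSb, hSc, hSd⟩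

theorem quarticS_roots (hp : 1 ≤ p) (hpn : 2*p + 1 ≤ n) :
    ∃ a b c d : ℝ, a < b ∧ b < 0 ∧ 0 < c ∧ c < d ∧
      ∀ x, (quarticS n p).IsRoot x ↔ x = a ∨ x = b ∨ x = c ∨ x = d := by
  obtain ⟨a, b, c, d, hab, hb0, hc0, hcd, ha, hb, hc, hd⟩ := exists_four_roots_quarticS hp hpn
  have hbc : b < c := hb0.trans hc0
  have hne : quarticS n p ≠ 0 := fun h ↦ by
    simpa [h] using quarticS_eval_zero_pos hp hpn
  have hcard : ({a, b, c, d} : Finset ℝ).card = 4 := Finset.card_eq_four.mpr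
    ⟨a, b, c, d, hab.ne, (hab.trans hbc).ne, (hab.trans (hbc.trans hcd)).ne, hbc.ne,
      (hbc.trans hcd).ne, hcd.ne, rfl⟩
  refine ⟨a, b, c, d, hab, hb0, hc0, hcd, fun x ↦ ⟨fun hx ↦ ?_, ?_⟩⟩
  · have hx : x ∈ ({a, b, c, d} : Finset ℝ) := mem_of_isRoot_of_natDegree_le_card hne
      (by simpa using ⟨ha, hb, hc, hd⟩) (hcard ▸ natDegree_quarticS_le n p) hx
    simpa using hx
  · rintro (rfl | rfl | rfl | rfl) <;> assumption

end

theorem stmt_16_general (n p : ℤ) (hp1 : 1 ≤ p) (hp2 : 2*p < n) (S : ℝ → ℝ)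
    (hS : S = fun x => (n : ℝ)^2*(n+1)*(3*n+4)*(2*n-p+1)*x^4
      + 4*n*(n+1)*(2*n-p+1)*(n^2-4*n*p-2*p^2-8*p-2)*x^3
      + 2*(n^5-19*n^4*p-11*n^4+36*n^3*p^2-18*n^3*p-30*n^3+22*n^2*p^3+130*n^2*p^2
          +54*n^2*p-22*n^2-16*n*p^4+4*n*p^3+108*n*p^2+68*n*p-4*n
          -16*p^4-16*p^3+16*p^2+16*p)*x^2
      - 8*(p+1)*(n-2*p)*(n+p+1)*(n^2-6*n*p-2*n+2*p^2-4*p-2)*x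
      + 8*(p+1)^2*(n-2*p)^2*(n+p+1)) :
    ∃ a b c d : ℝ, a < b ∧ b < 0 ∧ 0 < c ∧ c < d ∧
      S a = 0 ∧ S b = 0 ∧ S c = 0 ∧ S d = 0 ∧
      ∀ x : ℝ, S x = 0 → x = a ∨ x = b ∨ x = c ∨ x = d := by
  have hS' : S = fun x ↦ (quarticS n p).eval x := by
    subst hS
    ext x
    simp only [quarticS, eval_add, eval_sub, eval_mul, eval_C, eval_pow, eval_X]
  have hpn : 2*(p:ℝ) + 1 ≤ n := by exact_mod_cast hp2
  obtain ⟨a, b, c, d, hab, hb, hc, hcd, hroots⟩ := quarticS_roots (by exact_mod_cast hp1) hpn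
  subst hS'
  exact ⟨a, b, c, d, hab, hb, hc, hcd, (hroots a).2 (by simp), (hroots b).2 (by simp),
    (hroots c).2 (by simp), (hroots d).2 (by simp), fun x hx ↦ (hroots x).1 hx⟩

theorem stmt_16 (n p : ℤ) (hn : 3 ≤ n) (hp1 : 1 ≤ p) (hp2 : 2*p < n) (S : ℝ → ℝ)
    (hS : S = fun x => (n : ℝ)^2*(n+1)*(3*n+4)*(2*n-p+1)*x^4
      + 4*n*(n+1)*(2*n-p+1)*(n^2-4*n*p-2*p^2-8*p-2)*x^3
      + 2*(n^5-19*n^4*p-11*n^4+36*n^3*p^2-18*n^3*p-30*n^3+22*n^2*p^3+130*n^2*p^2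
          +54*n^2*p-22*n^2-16*n*p^4+4*n*p^3+108*n*p^2+68*n*p-4*n
          -16*p^4-16*p^3+16*p^2+16*p)*x^2
      - 8*(p+1)*(n-2*p)*(n+p+1)*(n^2-6*n*p-2*n+2*p^2-4*p-2)*x
      + 8*(p+1)^2*(n-2*p)^2*(n+p+1)) :
    ∃ a b c d : ℝ, a < b ∧ b < 0 ∧ 0 < c ∧ c < d ∧
      S a = 0 ∧ S b = 0 ∧ S c = 0 ∧ S d = 0 ∧
      ∀ x : ℝ, S x = 0 → x = a ∨ x = b ∨ x = c ∨ x = d :=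
  stmt_16_general n p hp1 hp2 S hS
end

section
/- Let S_{n,p}(x) be the quartic n²(n+1)(3n+4)(2n-p+1)x⁴ + 4n(n+1)(2n-p+1)(n²-4np-2p²-8p-2)x³ + 2(n⁵-19n⁴p-11n⁴+36n³p²-18n³p-30n³+22n²p³+130n²p²+54n²p-22n²-16np⁴+4np³+108np²+68np-4n-16p⁴-16p³+16p²+16p)x² - 8(p+1)(n-2p)(n+p+1)(n²-6np-2n+2p²-4p-2)x + 8(p+1)²(n-2p)²(n+p+1). For integers n ≥ 3 and n/2 < p ≤ n-1, the equation S_{n,p}(x) = 0 has four distinct positive real roots. -/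
/-!
Write `n = a + 2b + 3` and `p = a + b + 2` with `a, b ≥ 0`; this is exactly the range
`n + 1 ≤ 2p ≤ 2n - 2`. At each of the points `0 < (2p-n)/n < 2(2p-n)/n < 2(p+1)/n < 3`, the value of
`S_{n,p}`, with the denominator `n⁴` cleared, becomes up to sign a polynomial in `a, b` with positive coefficients,
so the signs alternate `+, -, +, -, +`, and the intermediate value theorem gives four roots.
-/

open NNReal

theorem exists_four_zeros_of_alternating_signs {f : ℝ → ℝ} (hf : Continuous f)
    {x₀ x₁ x₂ x₃ x₄ : ℝ} (h₀₁ : x₀ < x₁) (h₁₂ : x₁ < x₂) (h₂₃ : x₂ < x₃) (h₃₄ : x₃ < x₄)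
    (hf₀ : 0 < f x₀) (hf₁ : f x₁ < 0) (hf₂ : 0 < f x₂) (hf₃ : f x₃ < 0) (hf₄ : 0 < f x₄) :
    ∃ a b c d : ℝ, x₀ < a ∧ a < b ∧ b < c ∧ c < d ∧
      f a = 0 ∧ f b = 0 ∧ f c = 0 ∧ f d = 0 := by
  obtain ⟨a, ha, hfa⟩ := intermediate_value_Ioo' h₀₁.le hf.continuousOn ⟨hf₁, hf₀⟩
  obtain ⟨b, hb, hfb⟩ := intermediate_value_Ioo h₁₂.le hf.continuousOn ⟨hf₁, hf₂⟩
  obtain ⟨c, hc, hfc⟩ := intermediate_value_Ioo' h₂₃.le hf.continuousOn ⟨hf₃, hf₂⟩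
  obtain ⟨d, hd, hfd⟩ := intermediate_value_Ioo h₃₄.le hf.continuousOn ⟨hf₃, hf₄⟩
  exact ⟨a, b, c, d, ha.1, ha.2.trans hb.1, hb.2.trans hc.1, hc.2.trans hd.1, hfa, hfb, hfc, hfd⟩

/-- The quartic `S_{n,p}` of the Einstein equation on `Sp(n)/(U(p) × U(n-p))`. -/
def einsteinQuartic (n p x : ℝ) : ℝ :=
  n^2*(n+1)*(3*n+4)*(2*n-p+1)*x^4
    + 4*n*(n+1)*(2*n-p+1)*(n^2-4*n*p-2*p^2-8*p-2)*x^3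
    + 2*(n^5-19*n^4*p-11*n^4+36*n^3*p^2-18*n^3*p-30*n^3+22*n^2*p^3+130*n^2*p^2
        +54*n^2*p-22*n^2-16*n*p^4+4*n*p^3+108*n*p^2+68*n*p-4*n
        -16*p^4-16*p^3+16*p^2+16*p)*x^2
    - 8*(p+1)*(n-2*p)*(n+p+1)*(n^2-6*n*p-2*n+2*p^2-4*p-2)*x
    + 8*(p+1)^2*(n-2*p)^2*(n+p+1)

theorem continuous_einsteinQuartic (n p : ℝ) : Continuous (einsteinQuartic n p) := by
  unfold einsteinQuartic
  fun_prop

namespace einsteinQuartic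

variable {n p : ℝ} (h₁ : n + 1 ≤ 2 * p) (h₂ : p ≤ n - 1)
include h₁ h₂

theorem exists_nnreal_eq : ∃ a b : ℝ≥0, n = a + 2 * b + 3 ∧ p = a + b + 2 := by
  refine ⟨(2 * p - n - 1).toNNReal, (n - 1 - p).toNNReal, ?_, ?_⟩ <;>
    rw [Real.coe_toNNReal _ (by linarith), Real.coe_toNNReal _ (by linarith)] <;> ring

theorem pos_at_zero : 0 < einsteinQuartic n p 0 := by
  obtain ⟨a, b, rfl, rfl⟩ := exists_nnreal_eq h₁ h₂
  unfold einsteinQuartic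
  ring_nf
  positivity

theorem neg_at_sub_div : einsteinQuartic n p ((2 * p - n) / n) < 0 := by
  obtain ⟨a, b, rfl, rfl⟩ := exists_nnreal_eq h₁ h₂
  have hn : (a : ℝ) + 2 * b + 3 ≠ 0 := by positivity
  rw [← neg_pos]
  unfold einsteinQuartic
  field_simp
  ring_nf
  positivity

theorem pos_at_two_mul_sub_div : 0 < einsteinQuartic n p (2 * (2 * p - n) / n) := by
  obtain ⟨a, b, rfl, rfl⟩ := exists_nnreal_eq h₁ h₂
  have hn : (a : ℝ) + 2 * b + 3 ≠ 0 := by positivity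
  unfold einsteinQuartic
  field_simp
  ring_nf
  positivity

theorem neg_at_two_mul_succ_div : einsteinQuartic n p (2 * (p + 1) / n) < 0 := by
  obtain ⟨a, b, rfl, rfl⟩ := exists_nnreal_eq h₁ h₂
  have hn : (a : ℝ) + 2 * b + 3 ≠ 0 := by positivity
  rw [← neg_pos]
  unfold einsteinQuartic
  field_simp
  ring_nf
  positivity

theorem pos_at_three : 0 < einsteinQuartic n p 3 := by
  obtain ⟨a, b, rfl, rfl⟩ := exists_nnreal_eq h₁ h₂
  unfold einsteinQuartic
  ring_nf
  positivity

theorem exists_four_pos_roots :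
    ∃ a b c d : ℝ, 0 < a ∧ a < b ∧ b < c ∧ c < d ∧ einsteinQuartic n p a = 0 ∧
      einsteinQuartic n p b = 0 ∧ einsteinQuartic n p c = 0 ∧ einsteinQuartic n p d = 0 := by
  have hn : 0 < n := by linarith
  exact exists_four_zeros_of_alternating_signs (continuous_einsteinQuartic n p)
    (div_pos (by linarith) hn)
    (div_lt_div_of_pos_right (by linarith) hn)
    (div_lt_div_of_pos_right (by linarith) hn)
    ((div_lt_iff₀ hn).2 (by linarith))
    (pos_at_zero h₁ h₂) (neg_at_sub_div h₁ h₂) (pos_at_two_mul_sub_div h₁ h₂) (neg_at_two_mul_succ_div h₁ h₂)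
    (pos_at_three h₁ h₂)

end einsteinQuartic

theorem stmt_17_general (n p : ℤ) (hp1 : n < 2*p) (hp2 : p ≤ n - 1) (S : ℝ → ℝ)
    (hS : S = fun x => (n : ℝ)^2*(n+1)*(3*n+4)*(2*n-p+1)*x^4
      + 4*n*(n+1)*(2*n-p+1)*(n^2-4*n*p-2*p^2-8*p-2)*x^3
      + 2*(n^5-19*n^4*p-11*n^4+36*n^3*p^2-18*n^3*p-30*n^3+22*n^2*p^3+130*n^2*p^2
          +54*n^2*p-22*n^2-16*n*p^4+4*n*p^3+108*n*p^2+68*n*p-4*n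
          -16*p^4-16*p^3+16*p^2+16*p)*x^2
      - 8*(p+1)*(n-2*p)*(n+p+1)*(n^2-6*n*p-2*n+2*p^2-4*p-2)*x
      + 8*(p+1)^2*(n-2*p)^2*(n+p+1)) :
    ∃ a b c d : ℝ, 0 < a ∧ a < b ∧ b < c ∧ c < d ∧
      S a = 0 ∧ S b = 0 ∧ S c = 0 ∧ S d = 0 := by
  subst hS
  have h₁ : (n : ℝ) + 1 ≤ 2 * p := by exact_mod_cast Int.add_one_le_of_lt hp1
  have h₂ : (p : ℝ) ≤ n - 1 := by exact_mod_cast hp2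
  exact einsteinQuartic.exists_four_pos_roots h₁ h₂

theorem stmt_17 (n p : ℤ) (hn : 3 ≤ n) (hp1 : n < 2*p) (hp2 : p ≤ n - 1) (S : ℝ → ℝ)
    (hS : S = fun x => (n : ℝ)^2*(n+1)*(3*n+4)*(2*n-p+1)*x^4
      + 4*n*(n+1)*(2*n-p+1)*(n^2-4*n*p-2*p^2-8*p-2)*x^3
      + 2*(n^5-19*n^4*p-11*n^4+36*n^3*p^2-18*n^3*p-30*n^3+22*n^2*p^3+130*n^2*p^2
          +54*n^2*p-22*n^2-16*n*p^4+4*n*p^3+108*n*p^2+68*n*p-4*n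
          -16*p^4-16*p^3+16*p^2+16*p)*x^2
      - 8*(p+1)*(n-2*p)*(n+p+1)*(n^2-6*n*p-2*n+2*p^2-4*p-2)*x
      + 8*(p+1)^2*(n-2*p)^2*(n+p+1)) :
    ∃ a b c d : ℝ, 0 < a ∧ a < b ∧ b < c ∧ c < d ∧
      S a = 0 ∧ S b = 0 ∧ S c = 0 ∧ S d = 0 :=
  stmt_17_general n p hp1 hp2 S hS
end
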